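/- For every K > 0 there exists C > 0 such that the following holds: let ε ∈ (0, 1/2) and let w : ℝ² → ℝ be measurable with 0 ≤ w(x) ≤ K/ε² for almost every x and ∫_{ℝ²} w(x) dx = 1. If L > 0, x ∈ ℝ² satisfies Gw(x) ≥ log(1/ε) − L, and R satisfies 1 < R ≤ 1/ε, then ∫_{|x−y| ≥ Rε} w(y) dy ≤ (C + L) / log R. -/

import Mathlib

/-!
For `t ≥ 0` the kernel of `Gfun` is `log⁺ (1 / t)`, and it splits at scale `ε`:
`log⁺ (1 / t) ≤ log (1 / ε) - log R · 1_{t ≥ R ε} + log⁺ (ε / t)`,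
since beyond `R ε ≤ 1` it is at most `log (1 / (R ε))`, while `1 / t = (1 / ε) (ε / t)`.
Integrating against `w` (unit mass, `0 ≤ w ≤ K / ε²`), the first term gives `log (1 / ε)`,
the second `-log R` times the mass beyond `R ε`, and the third at most
`K / ε² · ∫ log⁺ (ε / |z|) dz ≤ 2πK`, computed in polar coordinates from `t log⁺ (ε / t) ≤ ε`
on `(0, ε]`. Comparing with `Gw(x) ≥ log (1 / ε) - L` gives `log R · mass ≤ 2πK + L`.
-/

open MeasureTheory Real intervalIntegral

/-- Euclidean norm on `ℝ²`. -/
noncomputable def vnorm (x : ℝ × ℝ) : ℝ := Real.sqrt (x.1 ^ 2 + x.2 ^ 2)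

/-- Rotation `R_a` on `ℝ²`. -/
noncomputable def vrot (a : ℝ) (x : ℝ × ℝ) : ℝ × ℝ :=
  (x.1 * Real.cos a + x.2 * Real.sin a, -x.1 * Real.sin a + x.2 * Real.cos a)

/-- Japanese bracket `⟨x⟩ = √(1+|x|²)` on `ℝ²`. -/
noncomputable def jap (x : ℝ × ℝ) : ℝ := Real.sqrt (1 + x.1 ^ 2 + x.2 ^ 2)

/-- The truncated logarithmic potential
`Gw(x) = ∫ log(1/|x−y|) 1_{|x−y|≤1} w(y) dy`. -/
noncomputable def Gfun (w : ℝ × ℝ → ℝ) (x : ℝ × ℝ) : ℝ :=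
  ∫ y : ℝ × ℝ, (if vnorm (x - y) ≤ 1 then Real.log (1 / vnorm (x - y)) else 0) * w y

lemma continuous_vnorm : Continuous vnorm :=
  ((continuous_fst.pow 2).add (continuous_snd.pow 2)).sqrt

lemma vnorm_nonneg (z : ℝ × ℝ) : 0 ≤ vnorm z := Real.sqrt_nonneg _

lemma vnorm_eq_norm (p : ℝ × ℝ) : vnorm p = ‖Complex.measurableEquivRealProd.symm p‖ := by
  rw [Complex.norm_eq_sqrt_sq_add_sq]; rfl

section Radial

variable {E : Type*} [NormedAddCommGroup E] [NormedSpace ℝ E]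

theorem integral_comp_vnorm (f : ℝ → E) :
    ∫ p, f (vnorm p) = (2 * π) • ∫ t in Set.Ioi 0, t • f t := by
  have h := Complex.volume_preserving_equiv_real_prod.symm.integral_comp
    Complex.measurableEquivRealProd.symm.measurableEmbedding (fun z : ℂ => f ‖z‖)
  simp only [← vnorm_eq_norm] at h
  rw [h, integral_fun_norm_addHaar, Measure.real, Complex.volume_ball]
  simp [mul_smul, ofNat_smul_eq_nsmul]

theorem integrable_comp_vnorm_iff {f : ℝ → E} :
    Integrable (fun p => f (vnorm p)) ↔ IntegrableOn (fun t => t • f t) (Set.Ioi 0) := by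
  have h := Complex.volume_preserving_equiv_real_prod.symm.integrable_comp_emb
    Complex.measurableEquivRealProd.symm.measurableEmbedding (g := fun z : ℂ => f ‖z‖)
  simp only [Function.comp_def, ← vnorm_eq_norm] at h
  rw [h, integrable_fun_norm_addHaar]
  simp

end Radial

section LogKernel

variable {ε : ℝ}

lemma mul_posLog_div_le_indicator (hε : 0 ≤ ε) {t : ℝ} (ht : 0 < t) :
    t * log⁺ (ε / t) ≤ (Set.Ioc 0 ε).indicator (fun _ => ε) t := by
  by_cases htε : t ≤ ε
  · rw [Set.indicator_of_mem (show t ∈ Set.Ioc 0 ε from ⟨ht, htε⟩)]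
    have hlog : log⁺ (ε / t) ≤ ε / t := by
      rw [posLog_apply]
      exact max_le (by positivity) (log_le_self (by positivity))
    calc t * log⁺ (ε / t) ≤ t * (ε / t) := by gcongr
      _ = ε := by field_simp
  · have h : log⁺ (ε / t) = 0 := by
      rw [posLog_eq_zero_iff, abs_of_nonneg (by positivity), div_le_one ht]
      linarith
    rw [h, mul_zero, Set.indicator_of_notMem (fun h => htε h.2)]

lemma integrable_indicator_Ioc_const (a b c : ℝ) :
    Integrable ((Set.Ioc a b).indicator fun _ => c) :=
  (integrableOn_const measure_Ioc_lt_top.ne).integrable_indicator measurableSet_Ioc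

lemma integrableOn_mul_posLog_div (hε : 0 ≤ ε) :
    IntegrableOn (fun t => t * log⁺ (ε / t)) (Set.Ioi 0) := by
  refine (integrable_indicator_Ioc_const 0 ε ε).integrableOn.mono'
    (by fun_prop : Measurable fun t : ℝ => t * log⁺ (ε / t)).aestronglyMeasurable ?_
  refine (ae_restrict_iff' measurableSet_Ioi).2 (ae_of_all _ fun t (ht : 0 < t) => ?_)
  rw [Real.norm_of_nonneg (mul_nonneg ht.le posLog_nonneg)]
  exact mul_posLog_div_le_indicator hε ht

lemma integrable_posLog_div_vnorm (hε : 0 ≤ ε) :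
    Integrable fun p => log⁺ (ε / vnorm p) :=
  integrable_comp_vnorm_iff.2 (integrableOn_mul_posLog_div hε)

lemma integral_posLog_div_vnorm_le (hε : 0 ≤ ε) :
    ∫ p, log⁺ (ε / vnorm p) ≤ 2 * π * ε ^ 2 := by
  have hmono : ∫ t in Set.Ioi 0, t * log⁺ (ε / t) ≤
      ∫ t in Set.Ioi 0, (Set.Ioc 0 ε).indicator (fun _ => ε) t :=
    setIntegral_mono_on (integrableOn_mul_posLog_div hε)
      (integrable_indicator_Ioc_const 0 ε ε).integrableOn
      measurableSet_Ioi fun t ht => mul_posLog_div_le_indicator hε ht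
  rw [setIntegral_indicator measurableSet_Ioc,
    Set.inter_eq_self_of_subset_right Set.Ioc_subset_Ioi_self, setIntegral_const,
    Real.volume_real_Ioc_of_le hε, sub_zero, smul_eq_mul] at hmono
  simp only [integral_comp_vnorm (fun t => log⁺ (ε / t)), smul_eq_mul]
  nlinarith [pi_pos]

end LogKernel

lemma ite_log_one_div_eq_posLog {t : ℝ} (ht : 0 ≤ t) :
    (if t ≤ 1 then log (1 / t) else 0) = log⁺ (1 / t) := by
  rw [posLog_apply, one_div, log_inv]
  split_ifs with h
  · exact (max_eq_right (neg_nonneg.2 (log_nonpos ht h))).symm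
  · exact (max_eq_left (neg_nonpos.2 (log_nonneg (not_le.1 h).le))).symm

lemma posLog_one_div_le {ε R t : ℝ} (hε : 0 < ε) (hR : 1 ≤ R) (hRε : R * ε ≤ 1) :
    log⁺ (1 / t) ≤
      log (1 / ε) - {s | R * ε ≤ s}.indicator (fun _ => log R) t + log⁺ (ε / t) := by
  have hε1 : 1 ≤ 1 / ε := by rw [le_div_iff₀ hε]; nlinarith
  by_cases ht : R * ε ≤ t
  · rw [Set.indicator_of_mem (show t ∈ {s | R * ε ≤ s} from ht)]
    have hRε0 : 0 < R * ε := by positivity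
    calc log⁺ (1 / t) ≤ log⁺ (1 / (R * ε)) :=
          posLog_le_posLog (one_div_pos.2 (hRε0.trans_le ht)).le (one_div_le_one_div_of_le hRε0 ht)
      _ = log (1 / ε) - log R := by
        rw [posLog_eq_log (by rw [abs_of_pos (by positivity), le_div_iff₀ hRε0]; linarith),
          one_div, one_div, log_inv, log_inv, log_mul (by positivity) hε.ne']
        ring
      _ ≤ _ := le_add_of_nonneg_right posLog_nonneg
  · rw [Set.indicator_of_notMem (show t ∉ {s | R * ε ≤ s} from ht), sub_zero,
      ← posLog_eq_log (by rwa [abs_of_pos (by positivity)])]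
    calc log⁺ (1 / t) = log⁺ (1 / ε * (ε / t)) := by rw [div_mul_div_cancel₀ hε.ne']
      _ ≤ _ := posLog_mul

lemma Gfun_le_log_sub_log_mul_setIntegral {w : ℝ × ℝ → ℝ} {M ε R : ℝ} (x : ℝ × ℝ)
    (hw : ∀ᵐ y, 0 ≤ w y ∧ w y ≤ M) (hwi : Integrable w) (hε : 0 < ε) (hR : 1 ≤ R)
    (hRε : R * ε ≤ 1) :
    Gfun w x ≤ log (1 / ε) * (∫ y, w y) - log R * (∫ y in {y | R * ε ≤ vnorm (x - y)}, w y) +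
      M * ∫ z, log⁺ (ε / vnorm z) := by
  set S := {y | R * ε ≤ vnorm (x - y)}
  have hS : MeasurableSet S := measurableSet_le measurable_const
    (continuous_vnorm.comp (continuous_const.sub continuous_id)).measurable
  have hI₁ : Integrable fun y => log (1 / ε) * w y := hwi.const_mul _
  have hI₂ : Integrable fun y => S.indicator (fun y => log R * w y) y :=
    (hwi.const_mul _).indicator hS
  have hI₃ : Integrable fun y => M * log⁺ (ε / vnorm (x - y)) :=
    ((integrable_posLog_div_vnorm hε.le).comp_sub_left x).const_mul M
  have hpt : ∀ y, 0 ≤ w y → w y ≤ M →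
      log⁺ (1 / vnorm (x - y)) * w y ≤
        log (1 / ε) * w y - S.indicator (fun y => log R * w y) y +
          M * log⁺ (ε / vnorm (x - y)) := by
    intro y hw0 hwM
    have hind : S.indicator (fun y => log R * w y) y =
        {s | R * ε ≤ s}.indicator (fun _ => log R) (vnorm (x - y)) * w y := by
      simp only [Set.indicator_apply, S, Set.mem_ofPred_eq]
      split_ifs <;> ring
    calc log⁺ (1 / vnorm (x - y)) * w y
        ≤ (log (1 / ε) - {s | R * ε ≤ s}.indicator (fun _ => log R) (vnorm (x - y)) +
            log⁺ (ε / vnorm (x - y))) * w y := by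
          gcongr
          exact posLog_one_div_le hε hR hRε
      _ ≤ _ := by
        rw [hind, add_mul, sub_mul, mul_comm (log⁺ _)]
        gcongr
        exact posLog_nonneg
  calc Gfun w x = ∫ y, log⁺ (1 / vnorm (x - y)) * w y := by
        simp only [Gfun, ite_log_one_div_eq_posLog, vnorm_nonneg]
    _ ≤ ∫ y, (log (1 / ε) * w y - S.indicator (fun y => log R * w y) y +
          M * log⁺ (ε / vnorm (x - y))) := by
        refine integral_mono_of_nonneg ?_ ?_ ?_
        · filter_upwards [hw] with y hy using mul_nonneg posLog_nonneg hy.1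
        · exact (hI₁.sub hI₂).add hI₃
        · filter_upwards [hw] with y hy using hpt y hy.1 hy.2
    _ = _ := by
        rw [MeasureTheory.integral_add (hI₁.sub' hI₂) hI₃, MeasureTheory.integral_sub hI₁ hI₂,
          MeasureTheory.integral_indicator hS, MeasureTheory.integral_const_mul,
          MeasureTheory.integral_const_mul, MeasureTheory.integral_const_mul,
          integral_sub_left_eq_self (fun z => log⁺ (ε / vnorm z))]

/-- at a point where `Gw(x) ≥ log(1/ε) − L`, the mass outside the
ball of radius `Rε` is at most `(C + L)/log R`. -/
theorem stmt_14 : ∀ K > (0:ℝ), ∃ C > (0:ℝ), ∀ ε : ℝ, ε ∈ Set.Ioo (0:ℝ) (1/2) →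
    ∀ w : ℝ × ℝ → ℝ, Measurable w →
    (∀ᵐ x : ℝ × ℝ, 0 ≤ w x ∧ w x ≤ K / ε ^ 2) →
    Integrable w → (∫ x : ℝ × ℝ, w x) = 1 →
    ∀ L > (0:ℝ), ∀ x : ℝ × ℝ, Real.log (1 / ε) - L ≤ Gfun w x →
    ∀ R : ℝ, 1 < R → R ≤ 1 / ε →
    (∫ y in {y : ℝ × ℝ | R * ε ≤ vnorm (x - y)}, w y) ≤ (C + L) / Real.log R := by
  intro K hK
  refine ⟨2 * π * K, by positivity, ?_⟩
  rintro ε ⟨hε, -⟩ w - hw hwi hw₁ L - x hGx R hR hRε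
  have hG := Gfun_le_log_sub_log_mul_setIntegral x hw hwi hε hR.le ((le_div_iff₀ hε).1 hRε)
  have hsingular : K / ε ^ 2 * ∫ z, log⁺ (ε / vnorm z) ≤ 2 * π * K :=
    calc K / ε ^ 2 * ∫ z, log⁺ (ε / vnorm z) ≤ K / ε ^ 2 * (2 * π * ε ^ 2) := by
          gcongr; exact integral_posLog_div_vnorm_le hε.le
      _ = 2 * π * K := by field_simp
  rw [hw₁, mul_one] at hG
  rw [le_div_iff₀ (log_pos hR)]
  linarith
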